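/- arXiv:1405.5088 — 2 statements merged into one kernel-verified Lean document; each statement's English description precedes it below -/
import Mathlib

section
/- Let (a,b,c) be an admissible triple of natural numbers, i.e., a+b+c is even and a ≤ b+c, b ≤ a+c, c ≤ a+b. Then the degree in q of Θ(a,b,c) = (-1)^{(a+b+c)/2} [(a+b+c)/2 + 1] · [(a+b+c)/2]! / ([(-a+b+c)/2]! [(a-b+c)/2]! [(a+b-c)/2]!) equals -(a^2+b^2+c^2)/8 + (ab+ac+bc)/4 + (a+b+c)/4, and its leading coefficient is (-1)^{(a+b+c)/2}. -/
/-! Write `t = q^{1/2}`. Multiplying numerator and denominator by `t^{m+1}` gives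
`[m+1] = (t^{2m+2} - 1) / (t^m (t^2 - 1))`, a quotient of monic polynomials of `t`-degree `m`.
Since `RatFunc.denom` is monic, `lc` is the leading coefficient of the numerator and hence
multiplicative, while `intDegree` is additive on nonzero elements. So `[n]!` has `t`-degree
`n(n-1)/2` and leading coefficient `1`, and with `s = (a+b+c)/2` the `t`-degree of `Θ(a,b,c)` is
`s + C(s,2) - C(s-a,2) - C(s-b,2) - C(s-c,2)`, whose half is the stated quadratic form. -/

open RatFunc

/-- The quantum integer `[n] = (t^n - t^{-n})/(t - t^{-1})` as a rational function in
`t = q^{1/2}`; it is in fact a Laurent polynomial in `t`. -/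
noncomputable def qint (n : ℕ) : RatFunc ℚ :=
  ((RatFunc.X : RatFunc ℚ)^n - (RatFunc.X : RatFunc ℚ)⁻¹^n) /
    ((RatFunc.X : RatFunc ℚ) - (RatFunc.X : RatFunc ℚ)⁻¹)

/-- The quantum factorial `[n]! = ∏_{k=1}^n [k]`. -/
noncomputable def qfact (n : ℕ) : RatFunc ℚ := ∏ k ∈ Finset.range n, qint (k + 1)

/-- The degree in `q` of a Laurent polynomial in `t = q^{1/2}`, namely half of the
degree in `t`. -/
noncomputable def qdeg (f : RatFunc ℚ) : ℚ := (f.intDegree : ℚ) / 2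

/-- The leading coefficient (coefficient of the top power of `q`). -/
noncomputable def lc (f : RatFunc ℚ) : ℚ := f.num.leadingCoeff / f.denom.leadingCoeff

/-- The theta graph evaluation
`Θ(a,b,c) = (-1)^s [s+1] [s]!/([s-a]![s-b]![s-c]!)` where `s = (a+b+c)/2`. -/
noncomputable def Theta (a b c : ℕ) : RatFunc ℚ :=
  (-1 : RatFunc ℚ)^((a + b + c)/2) * qint ((a + b + c)/2 + 1) * qfact ((a + b + c)/2) /
    (qfact ((b + c - a)/2) * qfact ((a + c - b)/2) * qfact ((a + b - c)/2))

theorem RatFunc.leadingCoeff_num_mul {K : Type*} [Field K] (x y : RatFunc K) :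
    (x * y).num.leadingCoeff = x.num.leadingCoeff * y.num.leadingCoeff := by
  simpa [(x.monic_denom.mul y.monic_denom).leadingCoeff, (x * y).monic_denom.leadingCoeff]
    using congrArg Polynomial.leadingCoeff (num_denom_mul x y)

theorem RatFunc.intDegree_neg_one_pow {K : Type*} [Field K] (n : ℕ) :
    ((-1 : RatFunc K) ^ n).intDegree = 0 := by
  rcases neg_one_pow_eq_or (RatFunc K) n with h | h <;> simp [h]

theorem pow_sub_inv_pow_div_sub_inv {K : Type*} [Field K] {x : K} (hx : x ≠ 0) (m : ℕ) :
    (x ^ (m + 1) - x⁻¹ ^ (m + 1)) / (x - x⁻¹) =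
      (x ^ (2 * (m + 1)) - 1) / (x ^ m * (x ^ 2 - 1)) := by
  rw [← mul_div_mul_left _ _ (pow_ne_zero (m + 1) hx)]
  congr 1
  · rw [mul_sub, ← mul_pow x x⁻¹, mul_inv_cancel₀ hx, one_pow]
    ring
  · field_simp
    ring

theorem Polynomial.natDegree_X_pow_sub_one {R : Type*} [Ring R] [Nontrivial R] (n : ℕ) :
    (Polynomial.X ^ n - 1 : Polynomial R).natDegree = n := by
  simpa using Polynomial.natDegree_X_pow_sub_C (n := n) (r := (1 : R))

theorem lc_eq_leadingCoeff_num (f : RatFunc ℚ) : lc f = f.num.leadingCoeff := by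
  rw [lc, f.monic_denom.leadingCoeff, div_one]

noncomputable def lcHom : RatFunc ℚ →*₀ ℚ where
  toFun := lc
  map_zero' := by simp [lc_eq_leadingCoeff_num]
  map_one' := by simp [lc_eq_leadingCoeff_num]
  map_mul' x y := by simp only [lc_eq_leadingCoeff_num, RatFunc.leadingCoeff_num_mul]

theorem lcHom_apply (f : RatFunc ℚ) : lcHom f = lc f := rfl

theorem lc_algebraMap (p : Polynomial ℚ) :
    lc (algebraMap (Polynomial ℚ) (RatFunc ℚ) p) = p.leadingCoeff := by
  rw [lc_eq_leadingCoeff_num, RatFunc.num_algebraMap]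

theorem lc_neg_one : lc (-1) = -1 := by
  simpa using lc_algebraMap (-1)

theorem qint_succ (m : ℕ) :
    qint (m + 1) = algebraMap (Polynomial ℚ) (RatFunc ℚ) (Polynomial.X ^ (2 * (m + 1)) - 1) /
      algebraMap (Polynomial ℚ) (RatFunc ℚ) (Polynomial.X ^ m * (Polynomial.X ^ 2 - 1)) := by
  rw [qint, pow_sub_inv_pow_div_sub_inv (K := RatFunc ℚ) RatFunc.X_ne_zero]
  simp only [map_sub, map_mul, map_pow, map_one, RatFunc.algebraMap_X]

theorem lc_qint_succ (m : ℕ) : lc (qint (m + 1)) = 1 := by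
  have hnum : (Polynomial.X ^ (2 * (m + 1)) - 1 : Polynomial ℚ).Monic :=
    Polynomial.monic_X_pow_sub_C 1 (by omega)
  have hden : (Polynomial.X ^ m * (Polynomial.X ^ 2 - 1) : Polynomial ℚ).Monic :=
    (Polynomial.monic_X_pow m).mul (Polynomial.monic_X_pow_sub_C 1 (by omega))
  rw [← lcHom_apply, qint_succ, map_div₀]
  simp only [lcHom_apply, lc_algebraMap, hnum.leadingCoeff, hden.leadingCoeff, div_one]

theorem lc_qfact (n : ℕ) : lc (qfact n) = 1 := by
  rw [← lcHom_apply, qfact, map_prod]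
  exact Finset.prod_eq_one fun k _ => lc_qint_succ k

theorem qint_succ_ne_zero (m : ℕ) : qint (m + 1) ≠ 0 := by
  intro h
  simpa [h, lc] using lc_qint_succ m

theorem qfact_ne_zero (n : ℕ) : qfact n ≠ 0 := by
  intro h
  simpa [h, lc] using lc_qfact n

theorem intDegree_qint_succ (m : ℕ) : (qint (m + 1)).intDegree = m := by
  have hnum : (Polynomial.X ^ (2 * (m + 1)) - 1 : Polynomial ℚ) ≠ 0 :=
    Polynomial.X_pow_sub_C_ne_zero (by omega) 1
  have hden : (Polynomial.X ^ 2 - 1 : Polynomial ℚ) ≠ 0 :=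
    Polynomial.X_pow_sub_C_ne_zero (by omega) 1
  rw [qint_succ, RatFunc.intDegree_div (RatFunc.algebraMap_ne_zero hnum)
    (RatFunc.algebraMap_ne_zero (mul_ne_zero (pow_ne_zero _ Polynomial.X_ne_zero) hden)),
    RatFunc.intDegree_polynomial, RatFunc.intDegree_polynomial,
    Polynomial.natDegree_mul (pow_ne_zero _ Polynomial.X_ne_zero) hden,
    Polynomial.natDegree_X_pow, Polynomial.natDegree_X_pow_sub_one,
    Polynomial.natDegree_X_pow_sub_one]
  omega

theorem intDegree_qfact (n : ℕ) : (qfact n).intDegree = n.choose 2 := by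
  induction n with
  | zero => simp [qfact]
  | succ n ih =>
    rw [qfact, Finset.prod_range_succ, ← qfact,
      RatFunc.intDegree_mul (qfact_ne_zero n) (qint_succ_ne_zero n), ih, intDegree_qint_succ,
      Nat.choose_succ_succ', Nat.choose_one_right]
    push_cast
    ring

theorem lc_Theta (a b c : ℕ) : lc (Theta a b c) = (-1) ^ ((a + b + c) / 2) := by
  simp only [← lcHom_apply, Theta, map_div₀, map_mul, map_pow]
  simp only [lcHom_apply, lc_neg_one, lc_qint_succ, lc_qfact, mul_one, div_one]

theorem Theta_of_add_eq_two_mul {a b c s : ℕ} (hs : a + b + c = 2 * s) :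
    Theta a b c = (-1) ^ s * qint (s + 1) * qfact s /
      (qfact (s - a) * qfact (s - b) * qfact (s - c)) := by
  rw [Theta, show (a + b + c) / 2 = s by omega, show (b + c - a) / 2 = s - a by omega,
    show (a + c - b) / 2 = s - b by omega, show (a + b - c) / 2 = s - c by omega]

theorem intDegree_Theta_of_add_eq_two_mul {a b c s : ℕ} (hs : a + b + c = 2 * s) :
    (Theta a b c).intDegree =
      s + s.choose 2 - ((s - a).choose 2 + (s - b).choose 2 + (s - c).choose 2) := by
  simp [Theta_of_add_eq_two_mul hs, RatFunc.intDegree_div, RatFunc.intDegree_mul,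
    RatFunc.intDegree_neg_one_pow, qint_succ_ne_zero, qfact_ne_zero, intDegree_qint_succ,
    intDegree_qfact]

theorem stmt_1 (a b c : ℕ) (heven : Even (a + b + c))
    (h1 : a ≤ b + c) (h2 : b ≤ a + c) (h3 : c ≤ a + b) :
    qdeg (Theta a b c) =
      -((a : ℚ)^2 + (b : ℚ)^2 + (c : ℚ)^2)/8
        + ((a : ℚ)*b + (a : ℚ)*c + (b : ℚ)*c)/4 + ((a : ℚ) + b + c)/4 ∧
    lc (Theta a b c) = (-1 : ℚ)^((a + b + c)/2) := by
  refine ⟨?_, lc_Theta a b c⟩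
  obtain ⟨s, hs⟩ := heven.two_dvd
  have hsq : (s : ℚ) = (a + b + c) / 2 := by
    rw [eq_div_iff two_ne_zero, mul_comm]
    exact_mod_cast hs.symm
  rw [qdeg, intDegree_Theta_of_add_eq_two_mul hs]
  push_cast [Nat.cast_sub (show a ≤ s by omega), Nat.cast_sub (show b ≤ s by omega),
    Nat.cast_sub (show c ≤ s by omega), Nat.cast_choose_two]
  rw [hsq]
  ring
end

section
/- Let m_1, m_2 be real numbers with m_1 + m_2 > 1/2, and let c_3(n) = (-3 + 2m_1 + 2m_2 + 2n + 2m_2 n)/(2(1 - 2m_1 - 2m_2)). Then Q(m_1, m_2, n, c_3(n), c_3(n)) with L = 2c_3(n) + n is a quadratic polynomial in n whose coefficient of n^2 equals (2m_1 + 3m_2)^2/(4(m_1 + m_2 - 1/2)). -/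
noncomputable def Q (m1 m2 n k1 k2 L : ℝ) : ℝ :=
  k1/2 - 3*k1^2/2 - 3*k1*k2 - k2^2 - k1*m1 - k1^2*m1 - k2*m2 - k2^2*m2 - 6*k1*n
    - 3*k2*n + 2*m1*n + 4*m2*n - k2*m2*n - 2*n^2 + m1*n^2 + 2*m2*n^2
    + (1/2)*((1 + 8*k1 + 4*k2 + 8*n)*L - 3*L^2)

/-! On the diagonal `k1 = k2 = k, L = 2k + n`, `Q` is a quadratic form in `(k, n)` plus linear
terms, and `c3 n = a n + β` is affine in `n`; so the `n²`-coefficient is the value of that form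
at `(a, 1)`, which for `a = (1 + m2)/(1 - 2 m1 - 2 m2)` simplifies to the claimed slope. -/

theorem Q_diag_eq (m1 m2 n k : ℝ) :
    Q m1 m2 n k k (2*k + n) =
      (1/2 - m1 - m2)*k^2 - (1 + m2)*k*n + (1/2 + m1 + 2*m2)*n^2
        + (3/2 - m1 - m2)*k + (1/2 + 2*m1 + 4*m2)*n := by
  unfold Q
  ring

theorem exists_quadratic_of_affine_subst (p q r s t a β : ℝ) :
    ∃ b c : ℝ, ∀ n : ℝ,
      p*(a*n + β)^2 + q*(a*n + β)*n + r*n^2 + s*(a*n + β) + t*n =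
        (p*a^2 + q*a + r)*n^2 + b*n + c :=
  ⟨2*p*a*β + q*β + s*a + t, p*β^2 + s*β, fun n => by ring⟩

theorem leading_coeff_eq (m1 m2 : ℝ) (hd : 1 - 2*m1 - 2*m2 ≠ 0) :
    (1/2 - m1 - m2)*((1 + m2)/(1 - 2*m1 - 2*m2))^2 - (1 + m2)*((1 + m2)/(1 - 2*m1 - 2*m2))
        + (1/2 + m1 + 2*m2) =
      (2*m1 + 3*m2)^2/(4*(m1 + m2 - 1/2)) := by
  have hd' : 4*(m1 + m2 - 1/2) ≠ 0 := fun h0 => hd (by linarith)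
  rw [eq_div_iff hd']
  field_simp
  ring

theorem stmt_15 (m1 m2 : ℝ) (h : m1 + m2 > 1/2)
    (c3 : ℝ → ℝ)
    (hc3 : ∀ n, c3 n = (-3 + 2*m1 + 2*m2 + 2*n + 2*m2*n)/(2*(1 - 2*m1 - 2*m2))) :
    ∃ b c : ℝ, ∀ n : ℝ,
      Q m1 m2 n (c3 n) (c3 n) (2*(c3 n) + n) =
        ((2*m1 + 3*m2)^2/(4*(m1 + m2 - 1/2)))*n^2 + b*n + c := by
  have hd : 1 - 2*m1 - 2*m2 ≠ 0 := fun h0 => by linarith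
  have hc3_affine : ∀ n, c3 n = (1 + m2)/(1 - 2*m1 - 2*m2) * n
      + (-3 + 2*m1 + 2*m2)/(2*(1 - 2*m1 - 2*m2)) := fun n => by rw [hc3]; field_simp; ring
  obtain ⟨b, c, hbc⟩ := exists_quadratic_of_affine_subst (1/2 - m1 - m2) (-(1 + m2))
    (1/2 + m1 + 2*m2) (3/2 - m1 - m2) (1/2 + 2*m1 + 4*m2) ((1 + m2)/(1 - 2*m1 - 2*m2))
    ((-3 + 2*m1 + 2*m2)/(2*(1 - 2*m1 - 2*m2)))
  refine ⟨b, c, fun n => ?_⟩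
  rw [Q_diag_eq, hc3_affine, ← leading_coeff_eq m1 m2 hd]
  linear_combination hbc n
end
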